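/- R_2 = inf over univariate CDFs F on R_{++} of sup_{x,y>0} [ 1 + y − min{1, 1−1/x+y}F(x) − yF(y) + min{1+1/x, 1+y}·max{0, F(x)+F(y)−1} ], where R_2 = inf over exchangeable bivariate distributions P of sup_{x,y>0} φ^P(x,y) with φ^P as defined via the marginal CDF F_P and joint CDF H_P of P. -/

import Mathlib

/-!
Both sides are infima of the same functional, `sup_{x,y>0} φ(x, y, F(x), F(y), H(x,y))`,
which is monotone in `H` because the coefficient `min (1 + 1/x) (1 + y)` is nonnegative.
Passing from an exchangeable law `P` to its marginal CDF `F` can only decrease it, by the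
Fréchet–Hoeffding bound `H ≥ max 0 (F x + F y - 1)`. Conversely every CDF `F` on `(0, ∞)` is
the marginal of the exchangeable law of `(Q U, Q (1 - U))`, `U` uniform on `(0, 1)` and `Q` the
quantile function of `F`, whose joint CDF is exactly `max 0 (F x + F y - 1)`.
-/

open MeasureTheory ENNReal Filter

open Set ProbabilityTheory Topology

def IsCDFOnIoi (F : ℝ → ℝ) : Prop :=
  MonotoneOn F (Ioi 0) ∧ (∀ x > (0 : ℝ), ContinuousWithinAt F (Ici x) x) ∧
    Tendsto F (𝓝[>] 0) (𝓝 0) ∧ Tendsto F atTop (𝓝 1) ∧ ∀ x > (0 : ℝ), F x ∈ Icc (0 : ℝ) 1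

/-- `φ^P(x, y)` as a function of `Fx = F_P(x)`, `Fy = F_P(y)` and `H = H_P(x, y)`. -/
noncomputable def phi (x y Fx Fy H : ℝ) : ℝ :=
  1 + y - min 1 (1 - 1 / x + y) * Fx - y * Fy + min (1 + 1 / x) (1 + y) * H

noncomputable def supPhi (F : ℝ → ℝ) (H : ℝ → ℝ → ℝ) : ℝ≥0∞ :=
  ⨆ x ∈ Ioi (0 : ℝ), ⨆ y ∈ Ioi (0 : ℝ), ENNReal.ofReal (phi x y (F x) (F y) (H x y))

lemma phi_mono {x y : ℝ} (hx : 0 ≤ x) (hy : 0 ≤ y) (Fx Fy : ℝ) : Monotone (phi x y Fx Fy) :=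
  fun H H' h => by unfold phi; gcongr

lemma supPhi_mono {F G : ℝ → ℝ} {H K : ℝ → ℝ → ℝ} (hFG : EqOn F G (Ioi 0))
    (hHK : ∀ x > 0, ∀ y > 0, H x y ≤ K x y) : supPhi F H ≤ supPhi G K :=
  iSup₂_mono fun x hx => iSup₂_mono fun y hy => ofReal_le_ofReal <| by
    rw [← hFG hx, ← hFG hy]
    exact phi_mono (le_of_lt hx) (le_of_lt hy) _ _ (hHK x hx y hy)

section Quantile

/-- For `u ≥ 1` the defining set may be empty, and then `sInf ∅ = 0`. -/
noncomputable def quantile (F : ℝ → ℝ) (u : ℝ) : ℝ := sInf {x | 0 < x ∧ u ≤ F x}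

variable {F : ℝ → ℝ} {u x : ℝ}

lemma bddBelow_setOf_pos_and_le (F : ℝ → ℝ) (u : ℝ) : BddBelow {x | 0 < x ∧ u ≤ F x} :=
  ⟨0, fun _ hx => hx.1.le⟩

lemma nonempty_setOf_pos_and_le (hF1 : Tendsto F atTop (𝓝 1)) (hu : u < 1) :
    {x | 0 < x ∧ u ≤ F x}.Nonempty :=
  (((hF1.eventually (Ici_mem_nhds hu))).and (eventually_gt_atTop 0)).exists.imp
    fun _ hx => ⟨hx.2, hx.1⟩

lemma quantile_le_iff (hmono : MonotoneOn F (Ioi 0))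
    (hrc : ∀ x > (0 : ℝ), ContinuousWithinAt F (Ici x) x) (hF1 : Tendsto F atTop (𝓝 1))
    (hu : u < 1) (hx : 0 < x) : quantile F u ≤ x ↔ u ≤ F x := by
  refine ⟨fun h => ?_, fun h => csInf_le (bddBelow_setOf_pos_and_le F u) ⟨hx, h⟩⟩
  have above : ∀ s > x, u ≤ F s := fun s hs => by
    obtain ⟨t, ⟨ht, hut⟩, hts⟩ :=
      exists_lt_of_csInf_lt (nonempty_setOf_pos_and_le hF1 hu) (h.trans_lt hs)
    exact hut.trans (hmono ht (hx.trans hs) hts.le)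
  exact ge_of_tendsto ((hrc x hx).mono Ioi_subset_Ici_self)
    (eventually_nhdsWithin_of_forall above)

lemma quantile_pos (hF0 : Tendsto F (𝓝[>] 0) (𝓝 0)) (hF1 : Tendsto F atTop (𝓝 1))
    (hu0 : 0 < u) (hu1 : u < 1) : 0 < quantile F u := by
  obtain ⟨ε, hε, hsmall⟩ :=
    mem_nhdsGT_iff_exists_Ioo_subset.1 (hF0 (Iio_mem_nhds hu0))
  refine hε.trans_le (le_csInf (nonempty_setOf_pos_and_le hF1 hu1) fun x ⟨hx, hux⟩ => ?_)
  by_contra! hxε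
  exact (hsmall ⟨hx, hxε⟩ : F x < u).not_ge hux

lemma monotoneOn_quantile (hF1 : Tendsto F atTop (𝓝 1)) : MonotoneOn (quantile F) (Iio 1) :=
  fun _ _ _ hv huv => csInf_le_csInf (bddBelow_setOf_pos_and_le F _)
    (nonempty_setOf_pos_and_le hF1 hv) fun _ hx => ⟨hx.1, huv.trans hx.2⟩

end Quantile

lemma volume_eq_of_Ioo_subset_of_subset_Icc {a b : ℝ} {s : Set ℝ} (h₁ : Ioo a b ⊆ s)
    (h₂ : s ⊆ Icc a b) : volume s = ENNReal.ofReal (b - a) :=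
  le_antisymm ((measure_mono h₂).trans_eq Real.volume_Icc)
    (Real.volume_Ioo.symm.trans_le (measure_mono h₁))

section Coupling

variable {F : ℝ → ℝ}

noncomputable def countermonotonicPair (F : ℝ → ℝ) (u : ℝ) : ℝ × ℝ :=
  (quantile F u, quantile F (1 - u))

noncomputable def lowerFrechetCoupling (F : ℝ → ℝ) : Measure (ℝ × ℝ) :=
  (volume.restrict (Ioo 0 1)).map (countermonotonicPair F)

lemma aemeasurable_countermonotonicPair (hF1 : Tendsto F atTop (𝓝 1)) :
    AEMeasurable (countermonotonicPair F) (volume.restrict (Ioo 0 1)) := by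
  have hanti : AntitoneOn (fun u => quantile F (1 - u)) (Ioo 0 1) := fun u hu v hv huv =>
    monotoneOn_quantile hF1 (by simp [hv.1]) (by simp [hu.1]) (by linarith)
  exact (aemeasurable_restrict_of_monotoneOn measurableSet_Ioo
    ((monotoneOn_quantile hF1).mono fun _ hu => hu.2)).prodMk
    (aemeasurable_restrict_of_antitoneOn measurableSet_Ioo hanti)

lemma lowerFrechetCoupling_apply (hF1 : Tendsto F atTop (𝓝 1)) {s : Set (ℝ × ℝ)}
    (hs : MeasurableSet s) :
    lowerFrechetCoupling F s = volume (countermonotonicPair F ⁻¹' s ∩ Ioo 0 1) := by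
  rw [lowerFrechetCoupling, Measure.map_apply_of_aemeasurable
    (aemeasurable_countermonotonicPair hF1) hs, Measure.restrict_apply' measurableSet_Ioo]

lemma isProbabilityMeasure_lowerFrechetCoupling (hF1 : Tendsto F atTop (𝓝 1)) :
    IsProbabilityMeasure (lowerFrechetCoupling F) := by
  have : IsProbabilityMeasure (volume.restrict (Ioo (0 : ℝ) 1)) := ⟨by simp⟩
  exact Measure.isProbabilityMeasure_map (aemeasurable_countermonotonicPair hF1)

lemma lowerFrechetCoupling_not_pos_and_pos_eq_zero (hF0 : Tendsto F (𝓝[>] 0) (𝓝 0))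
    (hF1 : Tendsto F atTop (𝓝 1)) :
    lowerFrechetCoupling F {p | ¬ (0 < p.1 ∧ 0 < p.2)} = 0 := by
  have hs : MeasurableSet {p : ℝ × ℝ | ¬ (0 < p.1 ∧ 0 < p.2)} :=
    ((measurableSet_lt measurable_const measurable_fst).inter
      (measurableSet_lt measurable_const measurable_snd)).compl
  rw [lowerFrechetCoupling_apply hF1 hs, ← measure_empty (μ := (volume : Measure ℝ))]
  congr 1
  refine eq_empty_of_forall_notMem fun u ⟨hu, hu0, hu1⟩ => hu ⟨?_, ?_⟩
  · exact quantile_pos hF0 hF1 hu0 hu1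
  · exact quantile_pos hF0 hF1 (by linarith) (by linarith)

lemma map_swap_lowerFrechetCoupling (hF1 : Tendsto F atTop (𝓝 1)) :
    (lowerFrechetCoupling F).map Prod.swap = lowerFrechetCoupling F := by
  set μ := volume.restrict (Ioo (0 : ℝ) 1)
  have hf := aemeasurable_countermonotonicPair hF1
  have hσ : MeasurePreserving (fun u : ℝ => 1 - u) μ μ := by
    simpa [preimage_const_sub_Ioo] using
      (volume.measurePreserving_sub_left (1 : ℝ)).restrict_preimage (s := Ioo 0 1)
        measurableSet_Ioo
  have hswap : Prod.swap ∘ countermonotonicPair F = countermonotonicPair F ∘ (1 - ·) := by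
    funext u
    simp [countermonotonicPair]
  calc (μ.map (countermonotonicPair F)).map Prod.swap
      = μ.map (Prod.swap ∘ countermonotonicPair F) :=
        AEMeasurable.map_map_of_aemeasurable measurable_swap.aemeasurable hf
    _ = μ.map (countermonotonicPair F ∘ (1 - ·)) := by rw [hswap]
    _ = (μ.map (1 - ·)).map (countermonotonicPair F) :=
        (AEMeasurable.map_map_of_aemeasurable (by rwa [hσ.map_eq])
          hσ.measurable.aemeasurable).symm
    _ = μ.map (countermonotonicPair F) := by rw [hσ.map_eq]

lemma lowerFrechetCoupling_fst_le (hmono : MonotoneOn F (Ioi 0))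
    (hrc : ∀ x > (0 : ℝ), ContinuousWithinAt F (Ici x) x) (hF1 : Tendsto F atTop (𝓝 1))
    {x : ℝ} (hx : 0 < x) (hFx : F x ≤ 1) :
    lowerFrechetCoupling F {p | p.1 ≤ x} = ENNReal.ofReal (F x) := by
  rw [lowerFrechetCoupling_apply hF1 (measurableSet_le measurable_fst measurable_const),
    ← sub_zero (F x)]
  refine volume_eq_of_Ioo_subset_of_subset_Icc (fun u ⟨hu0, hux⟩ => ?_)
    fun u ⟨hux, hu0, hu1⟩ => ⟨hu0.le, (quantile_le_iff hmono hrc hF1 hu1 hx).1 hux⟩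
  have hu1 : u < 1 := by linarith
  exact ⟨(quantile_le_iff hmono hrc hF1 hu1 hx).2 hux.le, hu0, hu1⟩

lemma lowerFrechetCoupling_fst_le_snd_le (hmono : MonotoneOn F (Ioi 0))
    (hrc : ∀ x > (0 : ℝ), ContinuousWithinAt F (Ici x) x) (hF1 : Tendsto F atTop (𝓝 1))
    {x y : ℝ} (hx : 0 < x) (hy : 0 < y) (hFx : F x ≤ 1) (hFy : F y ≤ 1) :
    lowerFrechetCoupling F {p | p.1 ≤ x ∧ p.2 ≤ y} = ENNReal.ofReal (F x + F y - 1) := by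
  have hs : MeasurableSet {p : ℝ × ℝ | p.1 ≤ x ∧ p.2 ≤ y} :=
    (measurableSet_le measurable_fst measurable_const).inter
      (measurableSet_le measurable_snd measurable_const)
  rw [lowerFrechetCoupling_apply hF1 hs, show F x + F y - 1 = F x - (1 - F y) by ring]
  refine volume_eq_of_Ioo_subset_of_subset_Icc (fun u ⟨hyu, hux⟩ => ?_)
    fun u ⟨⟨hux, huy⟩, hu0, hu1⟩ => ?_
  · have hu0 : 0 < u := by linarith
    have hu1 : u < 1 := by linarith
    exact ⟨⟨(quantile_le_iff hmono hrc hF1 hu1 hx).2 hux.le,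
      (quantile_le_iff hmono hrc hF1 (by linarith) hy).2 (by linarith)⟩, hu0, hu1⟩
  · have := (quantile_le_iff hmono hrc hF1 (by linarith) hy).1 huy
    exact ⟨by linarith, (quantile_le_iff hmono hrc hF1 hu1 hx).1 hux⟩

end Coupling

lemma measureReal_add_measureReal_le_one_add_inter {α : Type*} [MeasurableSpace α]
    {μ : Measure α} [IsZeroOrProbabilityMeasure μ] {s t : Set α} (ht : MeasurableSet t) :
    μ.real s + μ.real t ≤ 1 + μ.real (s ∩ t) := by
  rw [← measureReal_union_add_inter ht]
  gcongr
  exact measureReal_le_one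

lemma measure_snd_preimage_of_map_swap {α : Type*} [MeasurableSpace α] {μ : Measure (α × α)}
    (h : μ.map Prod.swap = μ) {s : Set α} (hs : MeasurableSet s) :
    μ (Prod.snd ⁻¹' s) = μ (Prod.fst ⁻¹' s) := by
  conv_lhs => rw [← h]
  exact Measure.map_apply measurable_swap (measurable_snd hs)

lemma max_zero_add_sub_one_le_measureReal_of_map_swap {μ : Measure (ℝ × ℝ)}
    [IsProbabilityMeasure μ] (h : μ.map Prod.swap = μ) (x y : ℝ) :
    max 0 (μ.real {p | p.1 ≤ x} + μ.real {p | p.1 ≤ y} - 1) ≤ μ.real {p | p.1 ≤ x ∧ p.2 ≤ y} := by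
  have hy : μ.real {p | p.2 ≤ y} = μ.real {p | p.1 ≤ y} :=
    congrArg ENNReal.toReal (measure_snd_preimage_of_map_swap h measurableSet_Iic)
  have : μ.real {p | p.1 ≤ x} + μ.real {p | p.2 ≤ y} ≤ 1 + μ.real {p | p.1 ≤ x ∧ p.2 ≤ y} :=
    measureReal_add_measureReal_le_one_add_inter (measurableSet_le measurable_snd measurable_const)
  refine max_le measureReal_nonneg ?_
  linarith

lemma cdf_map_fst (μ : Measure (ℝ × ℝ)) [IsProbabilityMeasure μ] :
    ⇑(cdf (μ.map Prod.fst)) = fun t => μ.real {p | p.1 ≤ t} := by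
  have := Measure.isProbabilityMeasure_map (μ := μ) measurable_fst.aemeasurable
  funext t
  rw [cdf_eq_real, map_measureReal_apply measurable_fst measurableSet_Iic]
  rfl

lemma isCDFOnIoi_cdf (ν : Measure ℝ) [IsProbabilityMeasure ν] (h : ν (Iic 0) = 0) :
    IsCDFOnIoi (cdf ν) := by
  have hcdf0 : cdf ν 0 = 0 := by rw [cdf_eq_real, measureReal_def, h, toReal_zero]
  refine ⟨(monotone_cdf ν).monotoneOn _, fun x _ => (cdf ν).right_continuous x, ?_,
    tendsto_cdf_atTop ν, fun x _ => ⟨cdf_nonneg ν x, cdf_le_one ν x⟩⟩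
  have := ((cdf ν).right_continuous 0).mono Ioi_subset_Ici_self
  rwa [ContinuousWithinAt, hcdf0] at this

lemma isCDFOnIoi_cdf_map_fst {μ : Measure (ℝ × ℝ)} [IsProbabilityMeasure μ]
    (h : μ {p | p.1 ≤ 0} = 0) : IsCDFOnIoi (cdf (μ.map Prod.fst)) := by
  have := Measure.isProbabilityMeasure_map (μ := μ) measurable_fst.aemeasurable
  exact isCDFOnIoi_cdf _ (by rwa [Measure.map_apply measurable_fst measurableSet_Iic])

/-- `R₂`, the infimum over exchangeable bivariate distributions
`P` on `ℝ_{++}²` of `sup_{x,y>0} φ^P(x,y)`, equals the infimum over univariate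
CDFs `F` on `ℝ_{++}` of `sup_{x,y>0}` of the same expression with the joint CDF
replaced by `max{0, F(x)+F(y)−1}`. -/
theorem stmt15 :
    (⨅ P ∈ {P : Measure (ℝ × ℝ) | IsProbabilityMeasure P ∧
        P {p : ℝ × ℝ | ¬ (0 < p.1 ∧ 0 < p.2)} = 0 ∧ P.map Prod.swap = P},
      ⨆ x ∈ Set.Ioi (0 : ℝ), ⨆ y ∈ Set.Ioi (0 : ℝ), ENNReal.ofReal
        (1 + y - min 1 (1 - 1 / x + y) * (P {p : ℝ × ℝ | p.1 ≤ x}).toReal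
          - y * (P {p : ℝ × ℝ | p.1 ≤ y}).toReal
          + min (1 + 1 / x) (1 + y) * (P {p : ℝ × ℝ | p.1 ≤ x ∧ p.2 ≤ y}).toReal))
    = ⨅ F ∈ {F : ℝ → ℝ | MonotoneOn F (Set.Ioi 0) ∧
        (∀ x > (0 : ℝ), ContinuousWithinAt F (Set.Ici x) x) ∧
        Tendsto F (nhdsWithin 0 (Set.Ioi 0)) (nhds 0) ∧
        Tendsto F atTop (nhds 1) ∧ ∀ x > (0 : ℝ), F x ∈ Set.Icc (0 : ℝ) 1},
      ⨆ x ∈ Set.Ioi (0 : ℝ), ⨆ y ∈ Set.Ioi (0 : ℝ), ENNReal.ofReal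
        (1 + y - min 1 (1 - 1 / x + y) * F x - y * F y
          + min (1 + 1 / x) (1 + y) * max 0 (F x + F y - 1)) := by
  change (⨅ P ∈ {P : Measure (ℝ × ℝ) | IsProbabilityMeasure P ∧
        P {p : ℝ × ℝ | ¬ (0 < p.1 ∧ 0 < p.2)} = 0 ∧ P.map Prod.swap = P},
      supPhi (fun t => P.real {p | p.1 ≤ t}) fun x y => P.real {p | p.1 ≤ x ∧ p.2 ≤ y}) =
    ⨅ F ∈ {F | IsCDFOnIoi F}, supPhi F fun x y => max 0 (F x + F y - 1)
  refine le_antisymm (le_iInf₂ fun F hF => ?_) (le_iInf₂ fun P hP => ?_)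
  · obtain ⟨hmono, hrc, hF0, hF1, hF⟩ := hF
    refine iInf₂_le_of_le (lowerFrechetCoupling F) ⟨isProbabilityMeasure_lowerFrechetCoupling hF1,
      lowerFrechetCoupling_not_pos_and_pos_eq_zero hF0 hF1, map_swap_lowerFrechetCoupling hF1⟩
      (supPhi_mono (fun x hx => ?_) fun x hx y hy => ?_)
    · rw [measureReal_def, lowerFrechetCoupling_fst_le hmono hrc hF1 hx (hF x hx).2,
        toReal_ofReal (hF x hx).1]
    · rw [measureReal_def, lowerFrechetCoupling_fst_le_snd_le hmono hrc hF1 hx hy (hF x hx).2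
        (hF y hy).2, toReal_ofReal', max_comm]
  · obtain ⟨hprob, hnull, hswap⟩ := hP
    have hfst : P {p | p.1 ≤ 0} = 0 := by
      refine measure_mono_null ?_ hnull
      rintro p hp ⟨hpos, -⟩
      exact not_le.2 hpos hp
    refine iInf₂_le_of_le (cdf (P.map Prod.fst)) (isCDFOnIoi_cdf_map_fst hfst) ?_
    rw [cdf_map_fst]
    exact supPhi_mono (fun _ _ => rfl) fun x _ y _ =>
      max_zero_add_sub_one_le_measureReal_of_map_swap hswap x y
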